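/- Let (G,α) be a weighted graph with expansion (H,β), and let E' be a multiset of edges on the vertices of H such that for each pair of vertices a,b of H, a and b lie in the same connected component of the graph (V(H),E') if and only if aRb. Then the chromatic polynomials satisfy χ_G = Σ_{S ⊆ E'} (−1)^{|S|} χ_{H+S}, where H+S denotes the graph obtained from H by adding the edge multiset S. -/

import Mathlib

open scoped BigOperators
open scoped Classical

namespace CSF

/-! ## Extended chromatic symmetric functions of multigraphs

A (multi)graph on a vertex type `V` is given by a multiset of edges `E : Multiset (Sym2 V)`
(loops and multiple edges allowed).  Colours are positive integers `ℕ+`, and the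
(extended) chromatic symmetric function lives in `MvPowerSeries ℕ+ ℚ`, the power series
in the commuting variables `x_j`, `j : ℕ+`. -/

/-- A proper colouring of the multigraph with edge multiset `E`. -/
def Proper {V C : Type*} (E : Multiset (Sym2 V)) (κ : V → C) : Prop :=
  ∀ u v : V, s(u, v) ∈ E → κ u ≠ κ v

/-- The monomial `∏_v x_{κ(v)}^{w(v)}`, recorded as its exponent vector. -/
noncomputable def mon {V : Type*} [Fintype V] (w : V → ℕ) (κ : V → ℕ+) : ℕ+ →₀ ℕ :=
  ∑ v, Finsupp.single (κ v) (w v)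

/-- The extended chromatic symmetric function `X_{(G,w)}` of the weighted graph with
edge multiset `E` and vertex weights `w`: the coefficient of a monomial `m` is the number
of proper colourings `κ` with `∏_v x_{κ(v)}^{w(v)} = x^m`. -/
noncomputable def X {V : Type*} [Fintype V] (E : Multiset (Sym2 V)) (w : V → ℕ) :
    MvPowerSeries ℕ+ ℚ :=
  fun m => (Nat.card {κ : V → ℕ+ // Proper E κ ∧ mon w κ = m} : ℚ)

/-- The chromatic polynomial `χ_G(k)`: the number of proper colourings with `k` colours. -/
noncomputable def chrom {V : Type*} [Fintype V] (E : Multiset (Sym2 V)) (k : ℕ) : ℕ :=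
  Nat.card {κ : V → Fin k // Proper E κ}

/-- Edge multiset of the labelled path `P_n` on `Fin n`: edges `v_i v_{i+1}`. -/
def pathE (n : ℕ) : Multiset (Sym2 (Fin n)) :=
  ((Finset.univ : Finset (Fin n × Fin n)).filter
    (fun p => (p.1 : ℕ) + 1 = (p.2 : ℕ))).val.map (fun p => s(p.1, p.2))

/-- Edge multiset of the labelled star `S_n` on `Fin n`: edges `v_i v_n`, `i ∈ [n-1]`. -/
def starE (n : ℕ) : Multiset (Sym2 (Fin n)) :=
  ((Finset.univ : Finset (Fin n × Fin n)).filter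
    (fun p => (p.1 : ℕ) + 1 < n ∧ (p.2 : ℕ) + 1 = n)).val.map (fun p => s(p.1, p.2))

/-- Edge multiset of a disjoint union of graphs on `Fin (m i)`, `i : Fin k`. -/
noncomputable def unionE {k : ℕ} {m : Fin k → ℕ}
    (Es : ∀ i, Multiset (Sym2 (Fin (m i)))) : Multiset (Sym2 (Σ i, Fin (m i))) :=
  ∑ i, (Es i).map (Sym2.map (fun v => ⟨i, v⟩))

/-- Extended chromatic symmetric function of a disjoint union of weighted graphs. -/
noncomputable def Xunion {k : ℕ} {m : Fin k → ℕ}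
    (Es : ∀ i, Multiset (Sym2 (Fin (m i)))) (ws : ∀ i, Fin (m i) → ℕ) :
    MvPowerSeries ℕ+ ℚ :=
  X (unionE Es) (fun v => ws v.1 v.2)

/-- `X_{P_l}`: chromatic symmetric function of the disjoint union of unweighted paths
`P_{l_1} ∪ ⋯ ∪ P_{l_k}`. -/
noncomputable def XPaths (l : List ℕ) : MvPowerSeries ℕ+ ℚ :=
  Xunion (m := fun i : Fin l.length => l.get i) (fun i => pathE (l.get i)) (fun _ _ => 1)

/-- `X_{S_l}`: chromatic symmetric function of a disjoint union of unweighted stars. -/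
noncomputable def XStars (l : List ℕ) : MvPowerSeries ℕ+ ℚ :=
  Xunion (m := fun i : Fin l.length => l.get i) (fun i => starE (l.get i)) (fun _ _ => 1)

/-- `X_{(P_{ℓ(α)}, α)}`: the extended chromatic symmetric function of the path on
`ℓ(α)` vertices whose `i`-th vertex has weight `α_i`. -/
noncomputable def Xwpath (α : List ℕ) : MvPowerSeries ℕ+ ℚ :=
  X (pathE α.length) (fun i => α.get i)

/-! ## Symmetric functions -/

/-- The power sum symmetric function `p_i = ∑_j x_j^i`. -/
noncomputable def pS (i : ℕ) : MvPowerSeries ℕ+ ℚ :=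
  fun m => if ∃ j : ℕ+, m = Finsupp.single j i then 1 else 0

/-- The complete homogeneous symmetric function `h_i`. -/
noncomputable def hS (i : ℕ) : MvPowerSeries ℕ+ ℚ :=
  fun m => if (m.sum fun _ k => k) = i then 1 else 0

/-- The elementary symmetric function `e_i`. -/
noncomputable def eS (i : ℕ) : MvPowerSeries ℕ+ ℚ :=
  fun m => if ((m.sum fun _ k => k) = i ∧ ∀ j, m j ≤ 1) then 1 else 0

/-- `p_λ = p_{λ_1} ⋯ p_{λ_k}`. -/
noncomputable def pProd (l : List ℕ) : MvPowerSeries ℕ+ ℚ := (l.map pS).prod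
/-- `h_λ = h_{λ_1} ⋯ h_{λ_k}`. -/
noncomputable def hProd (l : List ℕ) : MvPowerSeries ℕ+ ℚ := (l.map hS).prod
/-- `e_λ = e_{λ_1} ⋯ e_{λ_k}`. -/
noncomputable def eProd (l : List ℕ) : MvPowerSeries ℕ+ ℚ := (l.map eS).prod

/-- The algebra `Sym` of symmetric functions, realized as the subalgebra of
`MvPowerSeries ℕ+ ℚ` generated by the elementary symmetric functions. -/
noncomputable def SymAlg : Subalgebra ℚ (MvPowerSeries ℕ+ ℚ) :=
  Algebra.adjoin ℚ {f | ∃ i : ℕ, f = eS (i + 1)}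

/-- Sort a list into weakly decreasing order (the underlying partition `α̃`). -/
def sortDesc (l : List ℕ) : List ℕ := List.insertionSort (· ≥ ·) l

/-- Partitions: weakly decreasing lists of positive integers. -/
abbrev PartL : Type := {l : List ℕ // l.Pairwise (· ≥ ·) ∧ ∀ x ∈ l, 0 < x}

/-! ## Compositions -/

/-- All coarsenings of a composition: lists obtained by summing adjacent blocks. -/
def coarsenings : List ℕ → List (List ℕ)
  | [] => [[]]
  | a :: l =>
    (coarsenings l).map (fun β => a :: β) ++
      (coarsenings l).filterMap (fun β =>
        match β with
        | [] => none
        | b :: β' => some ((a + b) :: β'))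

/-- The ribbon Schur function `r_α = ∑_{β ≽ α} (-1)^{ℓ(α) - ℓ(β)} h_{β̃}`. -/
noncomputable def ribbon (α : List ℕ) : MvPowerSeries ℕ+ ℚ :=
  ((coarsenings α).map fun β =>
    ((-1 : ℚ) ^ (α.length - β.length)) • hProd (sortDesc β)).sum

lemma sum_take_get_le (α : List ℕ) (b : Fin α.length) :
    (α.take b).sum + α.get b ≤ α.sum := by
  have h1 : (α.take (b + 1)).sum = (α.take b).sum + α[b] := List.sum_take_succ α b b.isLt
  have h2 : (α.take (b + 1)).sum ≤ α.sum := by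
    conv_rhs => rw [← List.take_append_drop (b + 1) α]
    rw [List.sum_append]
    exact Nat.le_add_right _ _
  simpa [List.get_eq_getElem, ← h1] using h2

/-- Shift a graph on `Fin m` by an offset `o` inside `Fin n`. -/
def shiftE {m n : ℕ} (o : ℕ) (h : o + m ≤ n) (E : Multiset (Sym2 (Fin m))) :
    Multiset (Sym2 (Fin n)) :=
  E.map (Sym2.map (fun v : Fin m => (⟨o + (v : ℕ), by have := v.isLt; omega⟩ : Fin n)))

/-- The labelled graph `G_{α_1} | G_{α_2} | ⋯ | G_{α_k}` on `Fin (α₁ + ⋯ + α_k)`: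
consecutive blocks of vertices carry the graphs `Gr (α_i)`. -/
noncomputable def concatE (α : List ℕ) (Gr : (k : ℕ) → Multiset (Sym2 (Fin k))) :
    Multiset (Sym2 (Fin α.sum)) :=
  ∑ b : Fin α.length,
    shiftE ((α.take b).sum) (sum_take_get_le α b) (Gr (α.get b))

/-- `set(α) = {α_1, α_1+α_2, …, α_1+⋯+α_{ℓ(α)-1}} ⊆ [n-1]`. -/
def setC (α : List ℕ) : Finset ℕ :=
  ((List.range (α.length - 1)).map (fun j => (α.take (j + 1)).sum)).toFinset

/-- The labelled graph on `Fin n` whose edges are `v_i v_{i+1}` for `i ∈ S` (1-based). -/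
def edgesFromSet (n : ℕ) (S : Finset ℕ) : Multiset (Sym2 (Fin n)) :=
  ((Finset.univ : Finset (Fin n × Fin n)).filter
    (fun p => (p.1 : ℕ) + 1 = (p.2 : ℕ) ∧ (p.2 : ℕ) ∈ S)).val.map (fun p => s(p.1, p.2))

/-- `γ = α^c`, the complement composition: the composition of `|α|` with
`set(γ) = [n-1] − set(α)`. -/
def IsComplementOf (γ α : List ℕ) : Prop :=
  (∀ x ∈ γ, 0 < x) ∧ γ.sum = α.sum ∧ setC γ = Finset.Ioo 0 α.sum \ setC α

/-- Near concatenation `α ⊙ β` of compositions. -/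
def nconcat : List ℕ → List ℕ → List ℕ
  | [], β => β
  | [a], [] => [a]
  | [a], b :: β => (a + b) :: β
  | a :: l, β => a :: nconcat l β

/-- `β^{⊙ i}`, the `i`-fold near concatenation of `β` with itself. -/
def npowOdot (β : List ℕ) : ℕ → List ℕ
  | 0 => []
  | i + 1 => nconcat (npowOdot β i) β

/-- Composition of compositions: `α ∘ β = β^{⊙α_1} · ⋯ · β^{⊙α_{ℓ(α)}}`. -/
def compOp (α β : List ℕ) : List ℕ := (α.map (npowOdot β)).flatten

/-- The equivalence `α ∼ β`: `α` and `β` have `∘`-factorizations whose factors agree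
up to reversal.  (`[1]` is a two-sided identity for `∘`, so the empty fold is harmless.) -/
def simRel (α β : List ℕ) : Prop :=
  ∃ L M : List (List ℕ),
    List.Forall₂ (fun γ δ => (γ ≠ [] ∧ ∀ x ∈ γ, 0 < x) ∧ (δ = γ ∨ δ = γ.reverse)) L M ∧
    α = L.foldr compOp [1] ∧ β = M.foldr compOp [1]

/-- A trivial factorization `α = β ∘ γ`. -/
def TrivialFac (β γ : List ℕ) : Prop :=
  β = [1] ∨ γ = [1] ∨ (β.length = 1 ∧ γ.length = 1) ∨
    ((∀ x ∈ β, x = 1) ∧ ∀ x ∈ γ, x = 1)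

/-- `L` is an irreducible factorization of `α`. -/
def IsIrreducibleFac (α : List ℕ) (L : List (List ℕ)) : Prop :=
  (∀ γ ∈ L, γ ≠ [] ∧ ∀ x ∈ γ, 0 < x) ∧
  α = L.foldr compOp [1] ∧
  (∀ i : ℕ, ∀ h : i + 1 < L.length,
    ¬ TrivialFac (L.get ⟨i, by omega⟩) (L.get ⟨i + 1, h⟩)) ∧
  (∀ γ ∈ L, ∀ δ ε : List ℕ, δ ≠ [] → (∀ x ∈ δ, 0 < x) → ε ≠ [] → (∀ x ∈ ε, 0 < x) →
    γ = compOp δ ε → TrivialFac δ ε)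

/-- All compositions of `n` (lists of positive integers with sum `n`). -/
def comps : ℕ → List (List ℕ)
  | 0 => [[]]
  | n + 1 => (List.range (n + 1)).attach.flatMap fun j =>
      (comps j.1).map (fun c => (n + 1 - j.1) :: c)
  decreasing_by exact List.mem_range.mp j.2

/-- All refinements `α ≼ λ` of a composition `λ`. -/
def refinements : List ℕ → List (List ℕ)
  | [] => [[]]
  | a :: l => (comps a).flatMap fun c => (refinements l).map (fun r => c ++ r)

/-- All compositions `α ⊆ λ`: `ℓ(α) = ℓ(λ)` and `1 ≤ α_i ≤ λ_i`. -/
def boundedLists : List ℕ → List (List ℕ)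
  | [] => [[]]
  | a :: l => (List.range a).flatMap fun j => (boundedLists l).map (fun r => (j + 1) :: r)

/-! ## Expansions of weighted graphs -/

/-- Given a decomposition `L` of `β` witnessing `β ≼ α`, vertex `a` of `H` is in the block
`R(v_v)` (0-based `v`) when `a` lies among the consecutively labelled vertices of block `v`. -/
def inBlock (L : List (List ℕ)) (v a : ℕ) : Prop :=
  ((L.take v).map List.length).sum ≤ a ∧ a < ((L.take (v + 1)).map List.length).sum

/-- The relation `a R b`: `a` and `b` lie in a common block `R(v)`. -/
def Rrel (L : List (List ℕ)) (a b : ℕ) : Prop :=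
  ∃ v : ℕ, inBlock L v a ∧ inBlock L v b

/-! ## The lattice of contractions and its Möbius function -/

/-- The restriction of the graph `E` to `B` is connected. -/
def ConnOn {V : Type*} (E : Multiset (Sym2 V)) (B : Set V) : Prop :=
  ∀ a ∈ B, ∀ b ∈ B, Relation.ReflTransGen (fun x y => x ∈ B ∧ y ∈ B ∧ s(x, y) ∈ E) a b

/-- A connected set partition of the graph `E` (as a setoid on the vertices). -/
def ConnPart {V : Type*} (E : Multiset (Sym2 V)) (σ : Setoid V) : Prop :=
  ∀ v : V, ConnOn E {u | σ.r u v}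

/-- The lattice of contractions `L_G`: connected set partitions ordered by refinement. -/
def LContr {V : Type*} (E : Multiset (Sym2 V)) : Type _ := {σ : Setoid V // ConnPart E σ}

noncomputable instance setoidFintype {V : Type*} [Fintype V] : Fintype (Setoid V) :=
  Fintype.ofInjective (fun s : Setoid V => s.r)
    (fun s t h => by cases s; cases t; simp only at h; subst h; rfl)

noncomputable instance {V : Type*} [Fintype V] (E : Multiset (Sym2 V)) : Fintype (LContr E) :=
  letI := Classical.decPred (ConnPart E)
  Subtype.fintype _

instance {V : Type*} (E : Multiset (Sym2 V)) : PartialOrder (LContr E) :=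
  Subtype.partialOrder _

noncomputable instance {V : Type*} [Fintype V] (E : Multiset (Sym2 V)) :
    LocallyFiniteOrder (LContr E) :=
  letI := Classical.decRel (α := LContr E) (· < ·)
  letI := Classical.decRel (α := LContr E) (· ≤ ·)
  Fintype.toLocallyFiniteOrder

/-- The Möbius function of the lattice of contractions. -/
noncomputable def mobLC {V : Type*} [Fintype V] (E : Multiset (Sym2 V))
    (x y : LContr E) : ℚ :=
  letI := Classical.decEq (LContr E)
  IncidenceAlgebra.mu ℚ x y

/-- `p_{type(π,w)}`: the product over the blocks of `π` of `p_{(total weight of block)}`. -/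
noncomputable def ptype {V : Type*} [Fintype V] (σ : Setoid V) (w : V → ℕ) :
    MvPowerSeries ℕ+ ℚ :=
  letI := Classical.decEq (Quotient σ)
  letI := @Quotient.fintype V _ σ (Classical.decRel _)
  ∏ c : Quotient σ, pS (∑ v : V, if Quotient.mk σ v = c then w v else 0)

/-- `0̂`, the minimal element of the lattice of contractions: each vertex is its own block. -/
def botLC {V : Type*} (E : Multiset (Sym2 V)) : LContr E :=
  ⟨⊥, by
    intro v a ha b hb
    have ha' : a = v := ha
    have hb' : b = v := hb
    subst ha'; subst hb'; exact Relation.ReflTransGen.refl⟩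

/-! ## Composition of a composition with a weighted graph -/

section comp
variable {V : Type*} [Fintype V]

/-- The gluing relation: for `i ∈ S` (1-based), identify the vertex `z` of copy `i`
with the vertex `a` of copy `i + 1` (0-based copies `i - 1` and `i`). -/
def glueRel (a z : V) (n : ℕ) (S : Finset ℕ) : (Fin n × V) → (Fin n × V) → Prop :=
  fun x y => ∃ i ∈ S, ∃ (h1 : i - 1 < n) (h2 : i < n),
    x = (⟨i - 1, h1⟩, z) ∧ y = (⟨i, h2⟩, a)

def glueSetoid (a z : V) (n : ℕ) (S : Finset ℕ) : Setoid (Fin n × V) :=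
  Relation.EqvGen.setoid (glueRel a z n S)

/-- Vertices of the graph obtained from `n` copies of a graph on `V` by contracting the
connecting edges `z_i a_{i+1}`, `i ∈ S`. -/
def compV (a z : V) (n : ℕ) (S : Finset ℕ) : Type _ := Quotient (glueSetoid a z n S)

noncomputable instance (a z : V) (n : ℕ) (S : Finset ℕ) : Fintype (compV a z n S) :=
  @Quotient.fintype _ _ (glueSetoid a z n S) (Classical.decRel _)

/-- Edges: all edges of the `n` copies of `E`, together with the connecting edges
`z_i a_{i+1}` for `i ∈ [n-1] − S` (the ones not contracted). -/
noncomputable def compE (E : Multiset (Sym2 V)) (a z : V) (n : ℕ) (S : Finset ℕ) :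
    Multiset (Sym2 (compV a z n S)) :=
  (∑ i : Fin n, E.map (Sym2.map fun v =>
      (Quotient.mk (glueSetoid a z n S) (i, v) : compV a z n S)))
  + ((Finset.Ioo 0 n \ S).attach.val.map fun i =>
      s((Quotient.mk (glueSetoid a z n S)
          (⟨i.1 - 1, by
            have := i.2; simp only [Finset.mem_sdiff, Finset.mem_Ioo] at this; omega⟩, z) :
            compV a z n S),
        (Quotient.mk (glueSetoid a z n S)
          (⟨i.1, by
            have := i.2; simp only [Finset.mem_sdiff, Finset.mem_Ioo] at this; omega⟩, a) :
            compV a z n S)))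

/-- Weights: a contracted vertex receives the sum of the weights of its constituents. -/
noncomputable def compW (w : V → ℕ) (a z : V) (n : ℕ) (S : Finset ℕ) :
    compV a z n S → ℕ :=
  fun c => ∑ x : Fin n × V,
    if (Quotient.mk (glueSetoid a z n S) x : compV a z n S) = c then w x.2 else 0

/-- `X_{α ∘ (G,w)}`: take `|α|` copies of `(G,w)`, join successive copies by edges
`z_i a_{i+1}`, and contract exactly the connecting edges with `i ∈ set(α^c)`. -/
noncomputable def Xcomp (E : Multiset (Sym2 V)) (w : V → ℕ) (a z : V) (α : List ℕ) :
    MvPowerSeries ℕ+ ℚ :=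
  X (compE E a z α.sum (Finset.Ioo 0 α.sum \ setC α))
    (compW w a z α.sum (Finset.Ioo 0 α.sum \ setC α))

end comp

/-! For a colouring `κ` of `H`, `∑_{S ≤ E'} (-1)^{|S|} [κ proper for H + S]` equals
`[κ proper for H] · ∏_{e ∈ E'} (1 - [κ separates e])`, the indicator that `κ` is proper for `H`
and constant along `E'`, i.e. constant on the blocks `R(v)`. Those colourings are exactly the
pullbacks of proper colourings of `G` along the block map `a ↦ v` (`a ∈ R(v)`), which is
surjective because the blocks are nonempty. -/

theorem Multiset.sum_powerset_neg_one_pow_mul_ite {R α : Type*} [CommRing R]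
    (s : Multiset α) (p : α → Prop) [DecidablePred p] :
    (s.powerset.map fun t =>
        (-1 : R) ^ Multiset.card t * if ∀ a ∈ t, ¬ p a then 1 else 0).sum
      = if ∀ a ∈ s, p a then 1 else 0 := by
  induction s using Multiset.induction_on with
  | empty => simp
  | cons a s ih =>
    have hcons : (s.powerset.map fun t => (-1 : R) ^ Multiset.card (a ::ₘ t) *
        if ∀ b ∈ a ::ₘ t, ¬ p b then 1 else 0).sum
        = -(if p a then 0 else 1) * if ∀ b ∈ s, p b then 1 else 0 := by
      rw [← ih, ← Multiset.sum_map_mul_left]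
      refine congrArg _ (Multiset.map_congr rfl fun t _ => ?_)
      by_cases ha : p a <;> simp [ha, pow_succ]
    rw [Multiset.powerset_cons, Multiset.map_add, Multiset.sum_add, Multiset.map_map,
      Function.comp_def, hcons, ih]
    split_ifs <;> simp_all

section Colourings

variable {V W C : Type*}

theorem proper_iff_forall_not_isDiag (E : Multiset (Sym2 V)) (κ : V → C) :
    Proper E κ ↔ ∀ e ∈ E, ¬ (e.map κ).IsDiag := by
  simp [Proper, Sym2.forall]

theorem forall_isDiag_map_iff (E : Multiset (Sym2 V)) (κ : V → C) :
    (∀ e ∈ E, (e.map κ).IsDiag) ↔ ∀ u v, s(u, v) ∈ E → κ u = κ v := by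
  simp [Sym2.forall]

theorem proper_add (E S : Multiset (Sym2 V)) (κ : V → C) :
    Proper (E + S) κ ↔ Proper E κ ∧ Proper S κ := by
  simp only [Proper, Multiset.mem_add, or_imp, forall_and]

theorem natCard_subtype_eq_sum_ite [Fintype V] (P : V → Prop) [DecidablePred P] :
    (Nat.card {x // P x} : ℤ) = ∑ x, if P x then 1 else 0 := by
  rw [Nat.card_eq_fintype_card, Fintype.card_subtype, Finset.natCast_card_filter]

theorem sum_powerset_neg_one_pow_mul_card_proper [Fintype V] [Fintype C]
    (E E' : Multiset (Sym2 V)) :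
    (E'.powerset.map fun S =>
        (-1 : ℤ) ^ Multiset.card S * (Nat.card {κ : V → C // Proper (E + S) κ} : ℤ)).sum
      = Nat.card {κ : V → C // Proper E κ ∧ ∀ u v, s(u, v) ∈ E' → κ u = κ v} := by
  have hpointwise : ∀ κ : V → C, (E'.powerset.map fun S =>
        (-1 : ℤ) ^ Multiset.card S * if Proper (E + S) κ then 1 else 0).sum
      = if Proper E κ ∧ ∀ u v, s(u, v) ∈ E' → κ u = κ v then 1 else 0 := by
    intro κ
    by_cases hE : Proper E κ
    · simp only [proper_add, hE, true_and]
      have := Multiset.sum_powerset_neg_one_pow_mul_ite (R := ℤ) E' fun e => (e.map κ).IsDiag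
      simp only [proper_iff_forall_not_isDiag _ κ, ← forall_isDiag_map_iff]
      convert this using 5
      rfl
    · simp [proper_add, hE]
  simp only [natCard_subtype_eq_sum_ite, Finset.mul_sum]
  exact (Multiset.sum_map_sum_map _ _).trans (Finset.sum_congr rfl fun κ _ => hpointwise κ)

theorem forall_reflTransGen_imp_eq_iff (E : Multiset (Sym2 V)) (κ : V → C) :
    (∀ a b, Relation.ReflTransGen (fun x y => s(x, y) ∈ E) a b → κ a = κ b) ↔
      ∀ u v, s(u, v) ∈ E → κ u = κ v := by
  refine ⟨fun h u v huv => h u v (.single huv), fun h a b hab => ?_⟩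
  induction hab with
  | refl => rfl
  | tail _ hbc ih => exact ih.trans (h _ _ hbc)

theorem proper_comp_iff {EG : Multiset (Sym2 V)} {EH : Multiset (Sym2 W)} {π : W → V}
    (hE : ∀ u v, s(u, v) ∈ EG ↔ ∃ a b, s(a, b) ∈ EH ∧ π a = u ∧ π b = v) (κ : V → C) :
    Proper EH (κ ∘ π) ↔ Proper EG κ := by
  constructor
  · rintro h u v huv
    obtain ⟨a, b, hab, rfl, rfl⟩ := (hE u v).mp huv
    exact h a b hab
  · intro h a b hab
    exact h _ _ ((hE _ _).mpr ⟨a, b, hab, rfl, rfl⟩)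

theorem natCard_proper_eq_of_surjective {EG : Multiset (Sym2 V)} {EH : Multiset (Sym2 W)}
    {π : W → V} (hπ : Function.Surjective π)
    (hE : ∀ u v, s(u, v) ∈ EG ↔ ∃ a b, s(a, b) ∈ EH ∧ π a = u ∧ π b = v) :
    Nat.card {κ : W → C // Proper EH κ ∧ ∀ a b, π a = π b → κ a = κ b}
      = Nat.card {κ : V → C // Proper EG κ} := by
  symm
  refine Nat.card_eq_of_bijective
    (fun κ => ⟨κ.1 ∘ π, (proper_comp_iff hE κ.1).mpr κ.2, fun a b h => by simp [h]⟩)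
    ⟨fun κ κ' h => Subtype.ext (hπ.injective_comp_right (congrArg Subtype.val h)), ?_⟩
  rintro ⟨κ, hκ, hfib⟩
  have hlift : (κ ∘ Function.surjInv hπ) ∘ π = κ :=
    funext fun a => hfib _ _ (Function.surjInv_eq hπ (π a))
  exact ⟨⟨κ ∘ Function.surjInv hπ, (proper_comp_iff hE _).mp (by rwa [hlift])⟩,
    Subtype.ext hlift⟩

end Colourings

def blockComposition (L : List (List ℕ)) (hL : ∀ l ∈ L, l ≠ []) :
    Composition L.flatten.length where
  blocks := L.map List.length
  blocks_pos := by
    simp only [List.mem_map]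
    rintro _ ⟨l, hl, rfl⟩
    exact List.length_pos_iff.mpr (hL l hl)
  blocks_sum := List.length_flatten.symm

theorem inBlock_iff_index_eq (L : List (List ℕ)) (hL : ∀ l ∈ L, l ≠ [])
    (v : Fin (blockComposition L hL).length) (a : Fin L.flatten.length) :
    inBlock L v a ↔ (blockComposition L hL).index a = v := by
  rw [eq_comm, ← Composition.mem_range_embedding_iff', Composition.mem_range_embedding_iff]
  simp [inBlock, Composition.sizeUpTo, blockComposition, List.map_take]

theorem lt_length_of_inBlock {L : List (List ℕ)} {v a : ℕ} (h : inBlock L v a) :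
    v < L.length := by
  by_contra! hv
  obtain ⟨h1, h2⟩ := h
  rw [List.take_of_length_le hv] at h1
  rw [List.take_of_length_le (by omega)] at h2
  omega

theorem exists_surjective_inBlock_iff (L : List (List ℕ)) (hL : ∀ l ∈ L, l ≠ []) {m n : ℕ}
    (hm : L.length = m) (hn : L.flatten.length = n) :
    ∃ π : Fin n → Fin m, Function.Surjective π ∧
      ∀ (v : Fin m) (a : Fin n), inBlock L v a ↔ π a = v := by
  subst hm hn
  set c := blockComposition L hL
  have hc : c.length = L.length := List.length_map _
  refine ⟨fun a => (c.index a).cast hc, fun v => ?_, fun v a => ?_⟩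
  · refine ⟨c.embedding (v.cast hc.symm) ⟨0, c.blocks_pos' v (by omega)⟩, ?_⟩
    simp
  · rw [Fin.ext_iff, Fin.val_cast, ← Fin.val_cast hc.symm v, ← Fin.ext_iff]
    exact inBlock_iff_index_eq L hL _ a

theorem rrel_iff_of_inBlock_iff {L : List (List ℕ)} {m n : ℕ} (hm : L.length = m)
    {π : Fin n → Fin m} (hπ : ∀ (v : Fin m) (a : Fin n), inBlock L v a ↔ π a = v)
    (a b : Fin n) :
    Rrel L (a : ℕ) (b : ℕ) ↔ π a = π b := by
  constructor
  · rintro ⟨v, ha, hb⟩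
    have hv : v < m := hm ▸ lt_length_of_inBlock ha
    rw [(hπ ⟨v, hv⟩ a).mp ha, (hπ ⟨v, hv⟩ b).mp hb]
  · intro h
    exact ⟨π a, (hπ _ a).mpr rfl, (hπ _ b).mpr h.symm⟩

theorem chromatic_polynomial_inclusion_exclusion_general
    (α β : List ℕ)
    (EG : Multiset (Sym2 (Fin α.length))) (EH : Multiset (Sym2 (Fin β.length)))
    (L : List (List ℕ)) (hLjoin : L.flatten = β) (hLne : ∀ l ∈ L, l ≠ [])
    (hLsum : α = L.map List.sum)
    (hexpansion : ∀ u v : Fin α.length,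
      s(u, v) ∈ EG ↔ ∃ a b : Fin β.length,
        s(a, b) ∈ EH ∧ inBlock L (u : ℕ) (a : ℕ) ∧ inBlock L (v : ℕ) (b : ℕ))
    (E' : Multiset (Sym2 (Fin β.length)))
    (hE' : ∀ a b : Fin β.length,
      Relation.ReflTransGen (fun x y : Fin β.length => s(x, y) ∈ E') a b ↔
        Rrel L (a : ℕ) (b : ℕ)) :
    ∀ k : ℕ, (chrom EG k : ℤ) =
      (E'.powerset.map fun S =>
        ((-1 : ℤ) ^ Multiset.card S) * (chrom (EH + S) k : ℤ)).sum := by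
  intro k
  have hm : L.length = α.length := by rw [hLsum, List.length_map]
  obtain ⟨π, hπ, hblock⟩ :=
    exists_surjective_inBlock_iff L hLne hm (congrArg List.length hLjoin)
  have hEG : ∀ u v, s(u, v) ∈ EG ↔ ∃ a b, s(a, b) ∈ EH ∧ π a = u ∧ π b = v := by
    simpa only [hblock] using hexpansion
  have hconst : ∀ κ : Fin β.length → Fin k,
      (∀ a b, s(a, b) ∈ E' → κ a = κ b) ↔ ∀ a b, π a = π b → κ a = κ b := by
    intro κ
    simp only [← forall_reflTransGen_imp_eq_iff, hE', rrel_iff_of_inBlock_iff hm hblock]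
  calc (chrom EG k : ℤ)
      = Nat.card {κ : Fin β.length → Fin k //
          Proper EH κ ∧ ∀ a b, π a = π b → κ a = κ b} := by
        rw [chrom, natCard_proper_eq_of_surjective hπ hEG]
    _ = Nat.card {κ : Fin β.length → Fin k //
          Proper EH κ ∧ ∀ a b, s(a, b) ∈ E' → κ a = κ b} := by
        simp only [hconst]
    _ = _ := (sum_powerset_neg_one_pow_mul_card_proper EH E').symm

/-- **Corollary (inclusion–exclusion for chromatic polynomials).**
With the same hypotheses as the inclusion–exclusion relation for extended chromatic
symmetric functions, the chromatic polynomials satisfy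
`χ_G = ∑_{S ⊆ E'} (-1)^{|S|} χ_{H+S}` (as polynomials, i.e. at every number of colours `k`). -/
theorem chromatic_polynomial_inclusion_exclusion
    (α β : List ℕ) (hαpos : ∀ x ∈ α, 0 < x) (hβpos : ∀ x ∈ β, 0 < x)
    (EG : Multiset (Sym2 (Fin α.length))) (EH : Multiset (Sym2 (Fin β.length)))
    (L : List (List ℕ)) (hLjoin : L.flatten = β) (hLne : ∀ l ∈ L, l ≠ [])
    (hLsum : α = L.map List.sum)
    (hexpansion : ∀ u v : Fin α.length,
      s(u, v) ∈ EG ↔ ∃ a b : Fin β.length,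
        s(a, b) ∈ EH ∧ inBlock L (u : ℕ) (a : ℕ) ∧ inBlock L (v : ℕ) (b : ℕ))
    (E' : Multiset (Sym2 (Fin β.length)))
    (hE' : ∀ a b : Fin β.length,
      Relation.ReflTransGen (fun x y : Fin β.length => s(x, y) ∈ E') a b ↔
        Rrel L (a : ℕ) (b : ℕ)) :
    ∀ k : ℕ, (chrom EG k : ℤ) =
      (E'.powerset.map fun S =>
        ((-1 : ℤ) ^ Multiset.card S) * (chrom (EH + S) k : ℤ)).sum :=
  chromatic_polynomial_inclusion_exclusion_general α β EG EH L hLjoin hLne hLsum hexpansion E' hE'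

end CSF
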